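/- arXiv:1608.05178 — 2 statements merged into one kernel-verified Lean document; each statement's English description precedes it below -/
import Mathlib

section
/- Let G be a finite additive abelian group and φ ∈ Aut(G). Then the following are equivalent: (1) Alex(G,φ) is connected; (2) φ is fixed-point free; (3) the map a ↦ a - φ(a) is an automorphism of G. -/
/-- The Alexander quandle operation `a * b = φ a + b - φ b` on an additive abelian group. -/
def aop {A : Type*} [AddCommGroup A] (φ : A ≃+ A) (a b : A) : A := φ a + b - φ b

/-- The inner automorphism `S_b : a ↦ a * b` of `Alex(A, φ)`, as a permutation. -/
def S {A : Type*} [AddCommGroup A] (φ : A ≃+ A) (b : A) : Equiv.Perm A where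
  toFun a := aop φ a b
  invFun a := φ.symm (a - b + φ b)
  left_inv a := by
    show φ.symm (aop φ a b - b + φ b) = a
    rw [show aop φ a b - b + φ b = φ a from by simp [aop]; abel, AddEquiv.symm_apply_apply]
  right_inv a := by
    show aop φ (φ.symm (a - b + φ b)) b = a
    rw [aop, AddEquiv.apply_symm_apply]; abel

/-- The inner automorphism group of `Alex(A, φ)`. -/
def InnAlex {A : Type*} [AddCommGroup A] (φ : A ≃+ A) : Subgroup (Equiv.Perm A) :=
  Subgroup.closure (Set.range (S φ))

/-- The additive homomorphism `a ↦ a - φ a`. -/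
def psiHom {A : Type*} [AddCommGroup A] (φ : A ≃+ A) : A →+ A :=
  AddMonoidHom.mk' (fun a => a - φ a) (by intro a b; simp only [map_add]; abel)

lemma inn_diff_mem {A : Type*} [AddCommGroup A] (φ : A ≃+ A) {f : Equiv.Perm A}
    (hf : f ∈ InnAlex φ) (a : A) : f a - a ∈ (psiHom φ).range := by
  revert a
  refine Subgroup.closure_induction ?_ ?_ ?_ ?_ hf
  · rintro g ⟨b, rfl⟩ a
    refine ⟨b - a, ?_⟩
    simp only [psiHom, AddMonoidHom.mk'_apply, map_sub]
    show _ = S φ b a - a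
    simp only [S, Equiv.coe_fn_mk, aop]
    abel
  · intro a
    simp only [Equiv.Perm.coe_one, id_eq, sub_self]
    exact AddSubgroup.zero_mem _
  · intro f g _ _ hf hg a
    have : (f * g) a - a = (f (g a) - g a) + (g a - a) := by
      simp only [Equiv.Perm.mul_apply]; abel
    rw [this]
    exact AddSubgroup.add_mem _ (hf (g a)) (hg a)
  · intro f _ hf a
    have h := hf (f⁻¹ a)
    have h2 : f (f⁻¹ a) = a := Equiv.apply_symm_apply f a
    rw [h2] at h
    have : f⁻¹ a - a = -(a - f⁻¹ a) := by abel
    rw [this]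
    exact AddSubgroup.neg_mem _ h

/-- For a finite additive abelian group `G` and `φ ∈ Aut(G)`, the following are
equivalent: `Alex(G, φ)` is connected; `φ` is fixed-point free; and
`a ↦ a - φ a` is an automorphism of `G`. -/
theorem alex_connected_iff {G : Type*} [AddCommGroup G] [Finite G] (φ : G ≃+ G) :
    ((∀ x y : G, ∃ f ∈ InnAlex φ, f x = y) ↔ (∀ a : G, φ a = a → a = 0)) ∧
    ((∀ a : G, φ a = a → a = 0) ↔ Function.Bijective (fun a : G => a - φ a)) := by
  have hpsi : ∀ a : G, psiHom φ a = a - φ a := fun a => rfl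
  -- fixed-point free → injective
  have hinj : (∀ a : G, φ a = a → a = 0) → Function.Injective (fun a : G => a - φ a) := by
    intro h a b hab
    simp only at hab
    have : φ (a - b) = a - b := by
      rw [map_sub]
      exact (sub_eq_sub_iff_sub_eq_sub.mp hab).symm
    have := h _ this
    exact sub_eq_zero.mp this
  have h23 : (∀ a : G, φ a = a → a = 0) ↔ Function.Bijective (fun a : G => a - φ a) := by
    constructor
    · intro h
      exact (Finite.injective_iff_bijective).mp (hinj h)
    · intro h a ha
      have : a - φ a = 0 - φ 0 := by simp [ha]
      exact h.injective this
  refine ⟨?_, h23⟩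
  constructor
  · -- connected → fixed-point free
    intro hconn
    have hsurj : Function.Surjective (fun a : G => a - φ a) := by
      intro y
      obtain ⟨f, hf, hfy⟩ := hconn 0 y
      have := inn_diff_mem φ hf 0
      rw [hfy, sub_zero] at this
      obtain ⟨c, hc⟩ := this
      exact ⟨c, hc⟩
    have hbij := (Finite.surjective_iff_bijective).mp hsurj
    exact h23.mpr hbij
  · -- fixed-point free → connected
    intro h x y
    obtain ⟨b, hb⟩ := (h23.mp h).surjective (y - φ x)
    refine ⟨S φ b, Subgroup.subset_closure ⟨b, rfl⟩, ?_⟩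
    show aop φ x b = y
    simp only at hb
    rw [aop, add_sub_assoc, hb]
    abel
end

section
/- Let G be a finite additive abelian group and φ ∈ Aut(G) fixed-point free. Then the isotropy subgroup of Aut(Alex(G,φ)) at 0 equals the centralizer of φ in Aut(G); moreover Aut(Alex(G,φ)) ≅ G ⋊ C_{Aut(G)}(φ) and Inn(Alex(G,φ)) ≅ G ⋊ ⟨φ⟩. -/
/-- The automorphism group of `Alex(A, φ)`, as a subgroup of the permutation group. -/
def AlexAut {A : Type*} [AddCommGroup A] (φ : A ≃+ A) : Subgroup (Equiv.Perm A) where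
  carrier := {f | ∀ a b : A, f (aop φ a b) = aop φ (f a) (f b)}
  one_mem' := by intro a b; rfl
  mul_mem' := by
    intro f g hf hg a b
    simp only [Equiv.Perm.mul_apply]
    rw [hg, hf]
  inv_mem' := by
    intro f hf a b
    apply f.injective
    rw [show ∀ x, f (f⁻¹ x) = x from fun x => f.apply_symm_apply x, hf]
    simp only [show ∀ x, f (f⁻¹ x) = x from fun x => f.apply_symm_apply x]

/-- The multiplicative group structure on `AddAut A` (composition), as in the older Mathlib. -/
instance AddAut.mulGroupOfComp (A : Type*) [Add A] : Group (AddAut A) where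
  mul g h := AddEquiv.trans h g
  one := AddEquiv.refl _
  inv := AddEquiv.symm
  mul_assoc _ _ _ := rfl
  one_mul _ := rfl
  mul_one _ := rfl
  inv_mul_cancel := AddEquiv.self_trans_symm

section MyAux
variable {G : Type*} [AddCommGroup G]

/-- `AddAut G → Equiv.Perm G` as a monoid hom for the composition group structure. -/
def toPermHom : AddAut G →* Equiv.Perm G where
  toFun g := g.toEquiv
  map_one' := rfl
  map_mul' _ _ := rfl

lemma AddAut_mul_apply' (g h : AddAut G) (x : G) : (g * h) x = g (h x) := rfl

lemma AddAut_one_apply' (x : G) : (1 : AddAut G) x = x := rfl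

/-- The affine permutation `x ↦ g x + a`. -/
def PP (a : G) (g : AddAut G) : Equiv.Perm G := Equiv.addRight a * toPermHom g

lemma PP_apply (a : G) (g : AddAut G) (x : G) : PP a g x = g x + a := rfl

lemma PP_mul (a₁ a₂ : G) (g₁ g₂ : AddAut G) :
    PP a₁ g₁ * PP a₂ g₂ = PP (a₁ + g₁ a₂) (g₁ * g₂) := by
  ext x
  simp only [Equiv.Perm.mul_apply, PP_apply, AddAut_mul_apply', map_add]
  abel

lemma PP_one : PP (0 : G) 1 = 1 := by
  ext x; simp [PP_apply, AddAut_one_apply']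

lemma PP_inj {a a' : G} {g g' : AddAut G} (h : PP a g = PP a' g') : a = a' ∧ g = g' := by
  have hx : ∀ x, g x + a = g' x + a' := fun x => by
    rw [← PP_apply, ← PP_apply, h]
  have h0 := hx 0
  simp only [map_zero, zero_add] at h0
  refine ⟨h0, ?_⟩
  ext x
  have := hx x
  rw [h0] at this
  exact add_right_cancel this

lemma sub_bij (φ : G ≃+ G) [Finite G] (hfpf : ∀ a : G, φ a = a → a = 0) :
    Function.Bijective (fun b : G => b - φ b) := by
  rw [← Finite.injective_iff_bijective]
  intro b c h
  simp only at h
  have h2 : φ (b - c) = b - c := by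
    rw [map_sub]
    rw [sub_eq_sub_iff_sub_eq_sub] at h
    exact h.symm
  have := hfpf _ h2
  exact sub_eq_zero.mp this

lemma PP_mem_alexAut (φ : G ≃+ G) (a : G) (g : AddAut G)
    (hg : ∀ x, φ (g x) = g (φ x)) : PP a g ∈ AlexAut φ := by
  intro x y
  simp only [PP_apply, aop, map_add, map_sub, ← hg]
  abel

lemma centralizer_comm (φ : G ≃+ G) (g : AddAut G)
    (hg : g ∈ Subgroup.centralizer ({φ} : Set (AddAut G))) : ∀ x, φ (g x) = g (φ x) := by
  intro x
  have := Subgroup.mem_centralizer_iff.mp hg φ rfl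
  have := DFunLike.congr_fun this x
  simpa [AddAut_mul_apply'] using this

lemma isotropy (φ : G ≃+ G) [Finite G] (hfpf : ∀ a : G, φ a = a → a = 0)
    (f : Equiv.Perm G) (hf : f ∈ AlexAut φ) (h0 : f 0 = 0) :
    ∃ g ∈ Subgroup.centralizer ({φ} : Set (AddAut G)), ∀ x : G, g x = f x := by
  have hcomm : ∀ a, f (φ a) = φ (f a) := by
    intro a
    have := hf a 0
    simpa [aop, h0] using this
  have hsub : ∀ b, f (b - φ b) = f b - φ (f b) := by
    intro b
    have := hf 0 b
    simpa [aop, h0] using this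
  have hadd : ∀ x y : G, f (x + y) = f x + f y := by
    intro x y
    obtain ⟨b, hb⟩ := (sub_bij φ hfpf).2 y
    have hx : x + y = aop φ (φ.symm x) b := by
      simp only [aop, AddEquiv.apply_symm_apply]
      rw [← hb]; abel
    rw [hx, hf]
    have hb' : b - φ b = y := hb
    have h1 : f x = φ (f (φ.symm x)) := by rw [← hcomm, AddEquiv.apply_symm_apply]
    have h2 : f y = f b - φ (f b) := by rw [← hb']; exact hsub b
    rw [aop, h1, h2]
    abel
  refine ⟨AddEquiv.mk' f hadd, ?_, fun x => rfl⟩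
  rw [Subgroup.mem_centralizer_iff]
  rintro h rfl
  ext x
  exact (hcomm x).symm

lemma toPerm_phi_mem (φ : G ≃+ G) : toPermHom φ ∈ InnAlex φ := by
  have h : S φ 0 = toPermHom φ := by
    ext x
    show aop φ x 0 = φ x
    simp [aop]
  rw [← h]
  exact Subgroup.subset_closure ⟨0, rfl⟩

lemma addRight_mem_inn (φ : G ≃+ G) [Finite G] (hfpf : ∀ a : G, φ a = a → a = 0)
    (a : G) : (Equiv.addRight a : Equiv.Perm G) ∈ InnAlex φ := by
  obtain ⟨b, hb⟩ := (sub_bij φ hfpf).2 a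
  have h : (Equiv.addRight a : Equiv.Perm G) = S φ b * (toPermHom φ)⁻¹ := by
    ext x
    show x + a = aop φ (φ.symm x) b
    simp only [aop, AddEquiv.apply_symm_apply]
    rw [← hb]; abel
  rw [h]
  exact mul_mem (Subgroup.subset_closure ⟨b, rfl⟩) (inv_mem (toPerm_phi_mem φ))

lemma PP_mem_inn (φ : G ≃+ G) [Finite G] (hfpf : ∀ a : G, φ a = a → a = 0)
    (a : G) (g : AddAut G) (hg : g ∈ Subgroup.zpowers (φ : AddAut G)) :
    PP a g ∈ InnAlex φ := by
  obtain ⟨n, hn⟩ := hg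
  refine mul_mem (addRight_mem_inn φ hfpf a) ?_
  rw [← hn, map_zpow]
  exact zpow_mem (toPerm_phi_mem φ) n

lemma inn_surj (φ : G ≃+ G) (f : Equiv.Perm G) (hf : f ∈ InnAlex φ) :
    ∃ a : G, ∃ g ∈ Subgroup.zpowers (φ : AddAut G), f = PP a g := by
  induction hf using Subgroup.closure_induction with
  | mem x hx =>
    obtain ⟨b, rfl⟩ := hx
    refine ⟨b - φ b, φ, Subgroup.mem_zpowers _, ?_⟩
    ext x
    show aop φ x b = φ x + (b - φ b)
    simp only [aop]; abel
  | one => exact ⟨0, 1, one_mem _, PP_one.symm⟩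
  | mul x y hx hy ihx ihy =>
    obtain ⟨a, g, hg, rfl⟩ := ihx
    obtain ⟨a', g', hg', rfl⟩ := ihy
    exact ⟨a + g a', g * g', mul_mem hg hg', PP_mul _ _ _ _⟩
  | inv x hx ihx =>
    obtain ⟨a, g, hg, rfl⟩ := ihx
    refine ⟨-(g⁻¹ a), g⁻¹, inv_mem hg, ?_⟩
    apply inv_eq_of_mul_eq_one_left
    rw [PP_mul, neg_add_cancel, inv_mul_cancel, PP_one]

end MyAux

/-- For a finite additive abelian group `G` and a fixed-point free `φ ∈ Aut(G)`:
the isotropy subgroup of `Aut(Alex(G, φ))` at `0` is the centralizer `C_{Aut(G)}(φ)`;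
`Aut(Alex(G, φ)) ≅ G ⋊ C_{Aut(G)}(φ)`; and `Inn(Alex(G, φ)) ≅ G ⋊ ⟨φ⟩`. The
isomorphisms are bijections multiplicative for the semidirect product laws. -/
theorem alex_aut_inn {G : Type*} [AddCommGroup G] [Finite G] (φ : G ≃+ G)
    (hfpf : ∀ a : G, φ a = a → a = 0) :
    (∀ f : Equiv.Perm G, (f ∈ AlexAut φ ∧ f 0 = 0) ↔
      ∃ g ∈ Subgroup.centralizer ({φ} : Set (AddAut G)), ∀ x : G, g x = f x) ∧
    (∃ Ψ : G × Subgroup.centralizer ({φ} : Set (AddAut G)) ≃ AlexAut φ,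
      ∀ (a₁ a₂ : G) (g₁ g₂ : Subgroup.centralizer ({φ} : Set (AddAut G))),
        Ψ (a₁ + (g₁ : AddAut G) a₂, g₁ * g₂) = Ψ (a₁, g₁) * Ψ (a₂, g₂)) ∧
    (∃ Θ : G × Subgroup.zpowers (φ : AddAut G) ≃ InnAlex φ,
      ∀ (a₁ a₂ : G) (g₁ g₂ : Subgroup.zpowers (φ : AddAut G)),
        Θ (a₁ + (g₁ : AddAut G) a₂, g₁ * g₂) = Θ (a₁, g₁) * Θ (a₂, g₂)) := by
  refine ⟨?_, ?_, ?_⟩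
  · -- isotropy
    intro f
    constructor
    · rintro ⟨hf, h0⟩
      exact isotropy φ hfpf f hf h0
    · rintro ⟨g, hg, hgf⟩
      have hcom := centralizer_comm φ g hg
      have hPP : f = PP 0 g := by
        ext x
        rw [PP_apply, add_zero, hgf]
      constructor
      · rw [hPP]; exact PP_mem_alexAut φ 0 g hcom
      · rw [← hgf 0, map_zero]
  · -- Ψ
    set C := Subgroup.centralizer ({φ} : Set (AddAut G)) with hC
    have hmem : ∀ (p : G × C), PP p.1 (p.2 : AddAut G) ∈ AlexAut φ := fun p =>
      PP_mem_alexAut φ p.1 _ (centralizer_comm φ _ p.2.2)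
    let F : G × C → AlexAut φ := fun p => ⟨PP p.1 (p.2 : AddAut G), hmem p⟩
    have hbij : Function.Bijective F := by
      constructor
      · rintro ⟨a, g⟩ ⟨a', g'⟩ h
        have h' : PP a (g : AddAut G) = PP a' (g' : AddAut G) := congrArg Subtype.val h
        obtain ⟨h1, h2⟩ := PP_inj h'
        exact Prod.ext h1 (Subtype.ext h2)
      · rintro ⟨f, hf⟩
        have hmul : Equiv.addRight (-(f 0)) * f ∈ AlexAut φ := by
          refine mul_mem ?_ hf
          intro x y
          show aop φ x y + -(f 0) = aop φ (x + -(f 0)) (y + -(f 0))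
          simp only [aop, map_add]
          abel
        have h0 : (Equiv.addRight (-(f 0)) * f) 0 = 0 := by
          simp [Equiv.Perm.mul_apply]
        obtain ⟨g, hg, hgf⟩ := isotropy φ hfpf _ hmul h0
        refine ⟨(f 0, ⟨g, hg⟩), ?_⟩
        apply Subtype.ext
        ext x
        have := hgf x
        simp only [Equiv.Perm.mul_apply, Equiv.coe_addRight] at this
        show g x + f 0 = f x
        rw [this]; abel
    refine ⟨Equiv.ofBijective F hbij, ?_⟩
    intro a₁ a₂ g₁ g₂
    show F _ = F _ * F _
    apply Subtype.ext
    show PP (a₁ + (g₁ : AddAut G) a₂) ((g₁ * g₂ : C) : AddAut G) =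
      PP a₁ (g₁ : AddAut G) * PP a₂ (g₂ : AddAut G)
    rw [PP_mul]
    rfl
  · -- Θ
    set Z := Subgroup.zpowers (φ : AddAut G) with hZ
    have hmem : ∀ (p : G × Z), PP p.1 (p.2 : AddAut G) ∈ InnAlex φ := fun p =>
      PP_mem_inn φ hfpf p.1 _ p.2.2
    let F : G × Z → InnAlex φ := fun p => ⟨PP p.1 (p.2 : AddAut G), hmem p⟩
    have hbij : Function.Bijective F := by
      constructor
      · rintro ⟨a, g⟩ ⟨a', g'⟩ h
        have h' : PP a (g : AddAut G) = PP a' (g' : AddAut G) := congrArg Subtype.val h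
        obtain ⟨h1, h2⟩ := PP_inj h'
        exact Prod.ext h1 (Subtype.ext h2)
      · rintro ⟨f, hf⟩
        obtain ⟨a, g, hg, rfl⟩ := inn_surj φ f hf
        exact ⟨(a, ⟨g, hg⟩), rfl⟩
    refine ⟨Equiv.ofBijective F hbij, ?_⟩
    intro a₁ a₂ g₁ g₂
    show F _ = F _ * F _
    apply Subtype.ext
    show PP (a₁ + (g₁ : AddAut G) a₂) ((g₁ * g₂ : Z) : AddAut G) =
      PP a₁ (g₁ : AddAut G) * PP a₂ (g₂ : AddAut G)
    rw [PP_mul]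
    rfl
end
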